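/- Let 0 < α < 1, δ > 0, and let χ ∈ C_c^∞(ℝ) satisfy χ(t) = 0 for |t| ≥ δ. Let g ∈ C¹_c(ℝⁿ) with g(0,0,x') = 0 for all x' ∈ ℝ^{n-2}. Then the function h(x) = χ'(x₂/x₁^{1+α}) x₁^{-1-α} g(x), defined on {x₁ > 0, x₂ > 0}, satisfies the pointwise bound |h(x)| ≤ C |χ'(x₂/x₁^{1+α})| x₁^{-α}, and h ∈ L^p({x₁ > 0, x₂ > 0} ∩ B₁) for every 1 ≤ p < 1 + 2/α. -/

import Mathlib

open MeasureTheory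
open scoped ENNReal NNReal

set_option maxHeartbeats 1000000

private lemma deriv_eq_zero_outside {δ : ℝ} (hδ : 0 < δ) {χ : ℝ → ℝ} (hχ : ContDiff ℝ (⊤ : ℕ∞) χ)
    (hχ0 : ∀ t : ℝ, δ ≤ |t| → χ t = 0) : ∀ t : ℝ, δ ≤ |t| → deriv χ t = 0 := by
  have hU : IsOpen {t : ℝ | δ < |t|} := isOpen_lt continuous_const continuous_abs
  have h1 : Set.EqOn (deriv χ) 0 {t : ℝ | δ < |t|} := by
    intro t ht
    have hev : χ =ᶠ[nhds t] fun _ => 0 := by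
      filter_upwards [hU.mem_nhds ht] with s hs
      exact hχ0 s (le_of_lt hs)
    simp only [Pi.zero_apply]
    rw [hev.deriv_eq]
    exact deriv_const t 0
  have h2 : Set.EqOn (deriv χ) 0 (closure {t : ℝ | δ < |t|}) :=
    h1.closure (hχ.continuous_deriv (by simp)) continuous_const
  intro t ht
  apply h2
  rcases eq_or_lt_of_le ht with h | h
  · rw [Metric.mem_closure_iff]
    intro ε hε
    have ht0 : t ≠ 0 := by intro h0; rw [h0] at h; simp at h; linarith
    set c : ℝ := min ε δ / (2 * δ) with hc
    have hc0 : 0 < c := by positivity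
    refine ⟨t * (1 + c), ?_, ?_⟩
    · show δ < |t * (1 + c)|
      rw [abs_mul, ← h, abs_of_pos (by linarith : (0:ℝ) < 1 + c)]
      nlinarith
    · rw [Real.dist_eq]
      have : t - t * (1 + c) = -(t * c) := by ring
      rw [this, abs_neg, abs_mul, ← h, abs_of_pos hc0]
      have h1 : δ * c = min ε δ / 2 := by rw [hc, mul_div_assoc', mul_comm 2 δ, mul_div_mul_left _ _ hδ.ne']
      have h2 : min ε δ ≤ ε := min_le_left _ _
      rw [h1]; linarith
  · exact subset_closure h

private theorem aux_cutoff
    (n : ℕ) (α δ : ℝ) (hα0 : 0 < α) (hα1 : α < 1) (hδ : 0 < δ)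
    (χ : ℝ → ℝ) (hχ : ContDiff ℝ (⊤ : ℕ∞) χ) (hχc : HasCompactSupport χ)
    (hχ0 : ∀ t : ℝ, δ ≤ |t| → χ t = 0)
    (g : EuclideanSpace ℝ (Fin n) → ℝ) (hg : ContDiff ℝ 1 g) (hgc : HasCompactSupport g)
    (i0 i1 : Fin n) (hne : i0 ≠ i1)
    (hg0 : ∀ x : EuclideanSpace ℝ (Fin n), x i0 = 0 → x i1 = 0 → g x = 0) :
    (∃ C : ℝ, 0 ≤ C ∧ ∀ x : EuclideanSpace ℝ (Fin n), 0 < x i0 → 0 < x i1 →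
      |deriv χ (x i1 / x i0 ^ (1 + α)) * x i0 ^ (-(1 + α)) * g x| ≤
        C * |deriv χ (x i1 / x i0 ^ (1 + α))| * x i0 ^ (-α)) ∧
    ∀ p : ℝ, 1 ≤ p → p < 1 + 2 / α →
      MemLp
        (fun x : EuclideanSpace ℝ (Fin n) =>
          deriv χ (x i1 / x i0 ^ (1 + α)) * x i0 ^ (-(1 + α)) * g x)
        (ENNReal.ofReal p)
        (volume.restrict
          ({x : EuclideanSpace ℝ (Fin n) | 0 < x i0 ∧ 0 < x i1} ∩ Metric.ball 0 1)) := by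
  have hd0 : ∀ t : ℝ, δ ≤ |t| → deriv χ t = 0 := deriv_eq_zero_outside hδ hχ hχ0
  obtain ⟨Lip, hLip⟩ := hg.lipschitzWith_of_hasCompactSupport hgc one_ne_zero
  -- |g x| ≤ Lip * (|x i0| + |x i1|)
  have hgb : ∀ x : EuclideanSpace ℝ (Fin n), |g x| ≤ (Lip : ℝ) * (|x i0| + |x i1|) := by
    intro x
    set y : EuclideanSpace ℝ (Fin n) :=
      (WithLp.equiv 2 (Fin n → ℝ)).symm (fun i => if i = i0 ∨ i = i1 then 0 else x i) with hy
    have hyapp : ∀ i, y i = if i = i0 ∨ i = i1 then 0 else x i := fun i => rfl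
    have hy0 : y i0 = 0 := by rw [hyapp]; simp
    have hy1 : y i1 = 0 := by rw [hyapp]; simp
    have hdist : dist x y ≤ |x i0| + |x i1| := by
      rw [EuclideanSpace.dist_eq]
      have hsum : ∑ i, dist (x i) (y i) ^ 2 = dist (x i0) (y i0) ^ 2 + dist (x i1) (y i1) ^ 2 := by
        rw [← Finset.add_sum_erase _ _ (Finset.mem_univ i0),
          ← Finset.add_sum_erase _ _ (Finset.mem_erase.2 ⟨hne.symm, Finset.mem_univ i1⟩)]
        have hrest : ∑ i ∈ (Finset.univ.erase i0).erase i1, dist (x i) (y i) ^ 2 = 0 := by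
          refine Finset.sum_eq_zero fun i hi => ?_
          obtain ⟨h1, h2⟩ := Finset.mem_erase.1 hi
          obtain ⟨h0, _⟩ := Finset.mem_erase.1 h2
          rw [hyapp i, if_neg (by tauto)]
          simp
        rw [hrest]; ring
      rw [hsum, hy0, hy1]
      have e0 : dist (x i0) 0 = |x i0| := by rw [Real.dist_eq]; simp
      have e1 : dist (x i1) 0 = |x i1| := by rw [Real.dist_eq]; simp
      rw [e0, e1]
      calc Real.sqrt (|x i0| ^ 2 + |x i1| ^ 2)
          ≤ Real.sqrt ((|x i0| + |x i1|) ^ 2) := Real.sqrt_le_sqrt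
            (by nlinarith [abs_nonneg (x i0), abs_nonneg (x i1)])
        _ = |x i0| + |x i1| := Real.sqrt_sq (by positivity)
    have hl : dist (g x) (g y) ≤ (Lip : ℝ) * dist x y := hLip.dist_le_mul x y
    rw [hg0 y hy0 hy1] at hl
    calc |g x| = dist (g x) 0 := by rw [Real.dist_eq]; simp
      _ ≤ (Lip : ℝ) * dist x y := hl
      _ ≤ (Lip : ℝ) * (|x i0| + |x i1|) := by
          exact mul_le_mul_of_nonneg_left hdist (Lip.coe_nonneg)
  obtain ⟨M, hM⟩ := hgc.exists_bound_of_continuous hg.continuous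
  have hM0 : 0 ≤ M := le_trans (norm_nonneg _) (hM 0)
  set C : ℝ := max ((Lip : ℝ) * (1 + δ)) M with hCdef
  have hC0 : 0 ≤ C := le_trans hM0 (le_max_right _ _)
  have partA : ∀ x : EuclideanSpace ℝ (Fin n), 0 < x i0 → 0 < x i1 →
      |deriv χ (x i1 / x i0 ^ (1 + α)) * x i0 ^ (-(1 + α)) * g x| ≤
        C * |deriv χ (x i1 / x i0 ^ (1 + α))| * x i0 ^ (-α) := by
    intro x h0 h1
    set t : ℝ := x i1 / x i0 ^ (1 + α) with ht
    by_cases hder : deriv χ t = 0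
    · rw [hder]; simp [Real.rpow_nonneg h0.le, hC0]
    · have hP : (0 : ℝ) < x i0 ^ (1 + α) := Real.rpow_pos_of_pos h0 _
      have htδ : |t| < δ := by
        by_contra hcon
        exact hder (hd0 t (not_lt.1 hcon))
      have hx2 : x i1 ≤ δ * x i0 ^ (1 + α) := by
        have h2 := (abs_lt.1 htδ).2
        rw [ht, div_lt_iff₀ hP] at h2
        linarith
      have hgx : |g x| ≤ C * x i0 := by
        rcases le_total (x i0) 1 with hle | hle
        · have h11 : x i0 ^ (1 + α) ≤ x i0 := by
            calc x i0 ^ (1 + α) ≤ x i0 ^ (1 : ℝ) :=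
                Real.rpow_le_rpow_of_exponent_ge h0 hle (by linarith)
              _ = x i0 := Real.rpow_one _
          calc |g x| ≤ (Lip : ℝ) * (|x i0| + |x i1|) := hgb x
            _ = (Lip : ℝ) * (x i0 + x i1) := by rw [abs_of_pos h0, abs_of_pos h1]
            _ ≤ (Lip : ℝ) * (x i0 + δ * x i0) := by
                have : x i1 ≤ δ * x i0 := le_trans hx2 (by nlinarith)
                exact mul_le_mul_of_nonneg_left (by linarith) Lip.coe_nonneg
            _ = ((Lip : ℝ) * (1 + δ)) * x i0 := by ring
            _ ≤ C * x i0 := mul_le_mul_of_nonneg_right (le_max_left _ _) h0.le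
        · calc |g x| ≤ M := hM x
            _ = M * 1 := (mul_one M).symm
            _ ≤ M * x i0 := mul_le_mul_of_nonneg_left hle hM0
            _ ≤ C * x i0 := mul_le_mul_of_nonneg_right (le_max_right _ _) h0.le
      rw [abs_mul, abs_mul, abs_of_pos (Real.rpow_pos_of_pos h0 (-(1+α)))]
      calc |deriv χ t| * x i0 ^ (-(1 + α)) * |g x|
          ≤ |deriv χ t| * x i0 ^ (-(1 + α)) * (C * x i0) := by
            exact mul_le_mul_of_nonneg_left hgx
              (by positivity)
        _ = C * |deriv χ t| * (x i0 ^ (-(1 + α)) * x i0 ^ (1 : ℝ)) := by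
            rw [Real.rpow_one]; ring
        _ = C * |deriv χ t| * x i0 ^ (-α) := by
            rw [← Real.rpow_add h0]
            norm_num
  refine ⟨⟨C, hC0, partA⟩, ?_⟩
  intro p hp1 hp2
  have hp0 : (0:ℝ) < p := lt_of_lt_of_le one_pos hp1
  set f : EuclideanSpace ℝ (Fin n) → ℝ :=
    fun x => deriv χ (x i1 / x i0 ^ (1 + α)) * x i0 ^ (-(1 + α)) * g x with hf
  set S : Set (EuclideanSpace ℝ (Fin n)) :=
    {x | 0 < x i0 ∧ 0 < x i1} ∩ Metric.ball 0 1 with hSdef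
  have hmx0 : Measurable fun x : EuclideanSpace ℝ (Fin n) => x i0 :=
    (measurable_pi_apply i0).comp (MeasurableEquiv.toLp 2 (Fin n → ℝ)).symm.measurable
  have hmx1 : Measurable fun x : EuclideanSpace ℝ (Fin n) => x i1 :=
    (measurable_pi_apply i1).comp (MeasurableEquiv.toLp 2 (Fin n → ℝ)).symm.measurable
  have hmf : Measurable f :=
    (((hχ.continuous_deriv (by simp)).measurable.comp (hmx1.div ((hmx0.pow measurable_const)))).mul
      (hmx0.pow measurable_const)).mul hg.continuous.measurable
  have hS : MeasurableSet S := ((measurableSet_lt measurable_const hmx0).inter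
      (measurableSet_lt measurable_const hmx1)).inter measurableSet_ball
  obtain ⟨M', hM'⟩ := (hχc.deriv).exists_bound_of_continuous (hχ.continuous_deriv (by simp))
  have hM'0 : 0 ≤ M' := le_trans (norm_nonneg _) (hM' 0)
  set s : ℝ := α * p / (2 + α) with hs_def
  have hs0 : 0 < s := div_pos (mul_pos hα0 hp0) (by linarith)
  have hs1 : s < 1 := by
    rw [hs_def, div_lt_one (by linarith)]
    have h2 : α * p < α * (1 + 2 / α) := by nlinarith
    calc α * p < α * (1 + 2 / α) := h2
      _ = α + 2 := by field_simp
      _ = 2 + α := by ring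
  set K : ℝ := (C * M') ^ p * δ ^ s with hK_def
  set w : Fin n → ℝ → ℝ := fun i => if i = i0 ∨ i = i1 then
      (Set.Ioo (0:ℝ) 1).indicator (fun a => a ^ (-s)) else
      (Set.Ioo (-1:ℝ) 1).indicator (fun _ => 1) with hw
  have hwint : ∀ i, Integrable (w i) := by
    intro i
    by_cases hi : i = i0 ∨ i = i1
    · simp only [hw, if_pos hi]
      exact ((intervalIntegral.integrableOn_Ioo_rpow_iff one_pos).2 (by linarith)).integrable_indicator
        measurableSet_Ioo
    · simp only [hw, if_neg hi]
      refine (integrable_indicator_iff measurableSet_Ioo).2 ?_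
      refine integrableOn_const (lt_top_iff_ne_top.1 ?_)
      rw [Real.volume_Ioo]
      exact ENNReal.ofReal_lt_top
  have hGpi : Integrable (fun y : Fin n → ℝ => ∏ i, w i (y i)) := Integrable.fin_nat_prod hwint
  have hGE : Integrable (fun x : EuclideanSpace ℝ (Fin n) => K * ∏ i, w i (x i)) := by
    have h := ((EuclideanSpace.volume_preserving_symm_measurableEquiv_toLp (ι := Fin n)).integrable_comp_emb
      (MeasurableEquiv.measurableEmbedding _)).2 hGpi
    exact h.const_mul K
  have hkey : ∀ x ∈ S, (‖f x‖₊ : ℝ≥0∞) ^ p ≤ ENNReal.ofReal (K * ∏ i, w i (x i)) := by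
    intro x hx
    obtain ⟨⟨h0, h1⟩, hball⟩ := hx
    have hcoord : ∀ i, |x i| < 1 := by
      intro i
      have hnx : ‖x‖ < 1 := mem_ball_zero_iff.1 hball
      have hle : |x i| ≤ ‖x‖ := by
        have h := abs_real_inner_le_norm (EuclideanSpace.single i (1:ℝ)) x
        rw [EuclideanSpace.inner_single_left, EuclideanSpace.norm_single] at h
        simpa using h
      linarith
    have hprod : ∏ i, w i (x i) = x i0 ^ (-s) * x i1 ^ (-s) := by
      rw [← Finset.mul_prod_erase _ _ (Finset.mem_univ i0),
        ← Finset.mul_prod_erase _ _ (Finset.mem_erase.2 ⟨hne.symm, Finset.mem_univ i1⟩)]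
      have hrest : ∏ i ∈ (Finset.univ.erase i0).erase i1, w i (x i) = 1 := by
        refine Finset.prod_eq_one fun i hi => ?_
        obtain ⟨hi1, hi2⟩ := Finset.mem_erase.1 hi
        obtain ⟨hi0, _⟩ := Finset.mem_erase.1 hi2
        simp only [hw, if_neg (show ¬(i = i0 ∨ i = i1) by tauto)]
        exact Set.indicator_of_mem (Set.mem_Ioo.2 ⟨(abs_lt.1 (hcoord i)).1, (abs_lt.1 (hcoord i)).2⟩) _
      have hw0 : w i0 (x i0) = x i0 ^ (-s) := by
        simp only [hw, if_pos (show i0 = i0 ∨ i0 = i1 from Or.inl rfl)]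
        exact Set.indicator_of_mem (Set.mem_Ioo.2 ⟨h0, (abs_lt.1 (hcoord i0)).2⟩) _
      have hw1 : w i1 (x i1) = x i1 ^ (-s) := by
        simp only [hw, if_pos (show i1 = i0 ∨ i1 = i1 from Or.inr rfl)]
        exact Set.indicator_of_mem (Set.mem_Ioo.2 ⟨h1, (abs_lt.1 (hcoord i1)).2⟩) _
      rw [hrest, hw0, hw1, mul_one]
    have hreal : ‖f x‖ ^ p ≤ K * (x i0 ^ (-s) * x i1 ^ (-s)) := by
      set t : ℝ := x i1 / x i0 ^ (1 + α) with ht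
      by_cases hder : deriv χ t = 0
      · have hz : f x = 0 := by rw [hf]; simp only; rw [← ht, hder]; ring
        rw [hz, norm_zero, Real.zero_rpow (by linarith)]
        have : (0:ℝ) ≤ K := by positivity
        positivity
      · have hP : (0 : ℝ) < x i0 ^ (1 + α) := Real.rpow_pos_of_pos h0 _
        have htδ : |t| < δ := by
          by_contra hcon
          exact hder (hd0 t (not_lt.1 hcon))
        have hx2 : x i1 ≤ δ * x i0 ^ (1 + α) := by
          have h2 := (abs_lt.1 htδ).2
          rw [ht, div_lt_iff₀ hP] at h2
          linarith
        have hb1 : ‖f x‖ ≤ (C * M') * x i0 ^ (-α) := by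
          rw [Real.norm_eq_abs]
          calc |f x| ≤ C * |deriv χ t| * x i0 ^ (-α) := partA x h0 h1
            _ ≤ C * M' * x i0 ^ (-α) := by
                have hm := hM' t
                rw [Real.norm_eq_abs] at hm
                have hr : (0:ℝ) ≤ x i0 ^ (-α) := Real.rpow_nonneg h0.le _
                exact mul_le_mul_of_nonneg_right (mul_le_mul_of_nonneg_left hm hC0) hr
        have hCM0 : (0:ℝ) ≤ C * M' := mul_nonneg hC0 hM'0
        have hstep1 : ‖f x‖ ^ p ≤ (C * M') ^ p * x i0 ^ (-α * p) := by
          calc ‖f x‖ ^ p ≤ ((C * M') * x i0 ^ (-α)) ^ p :=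
              Real.rpow_le_rpow (norm_nonneg _) hb1 (by linarith)
            _ = (C * M') ^ p * (x i0 ^ (-α)) ^ p :=
              Real.mul_rpow hCM0 (Real.rpow_nonneg h0.le _)
            _ = (C * M') ^ p * x i0 ^ (-α * p) := by rw [← Real.rpow_mul h0.le]
        have hsplit : x i0 ^ (-α * p) ≤ δ ^ s * (x i0 ^ (-s) * x i1 ^ (-s)) := by
          have hexp : -α * p = -s + -(1 + α) * s := by
            rw [hs_def]; field_simp; ring
          have hdiv : x i0 ^ (-(1 + α)) ≤ δ / x i1 := by
            rw [Real.rpow_neg h0.le, inv_eq_one_div, div_le_div_iff₀ hP h1]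
            nlinarith
          have hfac : x i0 ^ (-(1 + α) * s) ≤ δ ^ s * x i1 ^ (-s) := by
            calc x i0 ^ (-(1 + α) * s) = (x i0 ^ (-(1 + α))) ^ s := Real.rpow_mul h0.le _ _
              _ ≤ (δ / x i1) ^ s := Real.rpow_le_rpow (Real.rpow_nonneg h0.le _) hdiv hs0.le
              _ = δ ^ s / x i1 ^ s := Real.div_rpow hδ.le h1.le s
              _ = δ ^ s * x i1 ^ (-s) := by rw [Real.rpow_neg h1.le, div_eq_mul_inv]
          calc x i0 ^ (-α * p)
              = x i0 ^ (-s) * x i0 ^ (-(1 + α) * s) := by rw [← Real.rpow_add h0, ← hexp]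
            _ ≤ x i0 ^ (-s) * (δ ^ s * x i1 ^ (-s)) :=
              mul_le_mul_of_nonneg_left hfac (Real.rpow_nonneg h0.le _)
            _ = δ ^ s * (x i0 ^ (-s) * x i1 ^ (-s)) := by ring
        calc ‖f x‖ ^ p ≤ (C * M') ^ p * x i0 ^ (-α * p) := hstep1
            _ ≤ (C * M') ^ p * (δ ^ s * (x i0 ^ (-s) * x i1 ^ (-s))) :=
              mul_le_mul_of_nonneg_left hsplit (by positivity)
            _ = K * (x i0 ^ (-s) * x i1 ^ (-s)) := by rw [hK_def]; ring
    rw [hprod]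
    rw [← enorm_eq_nnnorm, ← ofReal_norm, ENNReal.ofReal_rpow_of_nonneg (norm_nonneg _)
      (by linarith : (0:ℝ) ≤ p)]
    exact ENNReal.ofReal_le_ofReal hreal
  refine ⟨hmf.aestronglyMeasurable, ?_⟩
  have hq0 : (ENNReal.ofReal p) ≠ 0 := by
    simp only [ne_eq, ENNReal.ofReal_eq_zero, not_le]; linarith
  rw [eLpNorm_lt_top_iff_lintegral_rpow_enorm_lt_top hq0 ENNReal.ofReal_ne_top,
    ENNReal.toReal_ofReal (by linarith : (0:ℝ) ≤ p)]
  refine lt_of_le_of_lt (le_trans (setLIntegral_mono' hS hkey)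
    (setLIntegral_le_lintegral _ _)) hGE.lintegral_lt_top


/-- Pointwise bound and `L^p` integrability (`1 ≤ p < 1 + 2/α`) on the thin region
`{x₁ > 0, x₂ > 0} ∩ B₁` of `h(x) = χ'(x₂/x₁^{1+α}) x₁^{-1-α} g(x)`, where `χ` is a cutoff
supported in `[-δ,δ]` and `g ∈ C¹_c(ℝⁿ)` vanishes on `{x₁ = x₂ = 0}`. -/
theorem cutoff_derivative_term_bound_and_integrability
    (n : ℕ) (hn : 2 ≤ n) (α δ : ℝ) (hα0 : 0 < α) (hα1 : α < 1) (hδ : 0 < δ)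
    (χ : ℝ → ℝ) (hχ : ContDiff ℝ (⊤ : ℕ∞) χ) (hχc : HasCompactSupport χ)
    (hχ0 : ∀ t : ℝ, δ ≤ |t| → χ t = 0)
    (g : EuclideanSpace ℝ (Fin n) → ℝ) (hg : ContDiff ℝ 1 g) (hgc : HasCompactSupport g)
    (hg0 : ∀ x : EuclideanSpace ℝ (Fin n),
      x ⟨0, by omega⟩ = 0 → x ⟨1, by omega⟩ = 0 → g x = 0) :
    (∃ C : ℝ, 0 ≤ C ∧ ∀ x : EuclideanSpace ℝ (Fin n),
      0 < x ⟨0, by omega⟩ → 0 < x ⟨1, by omega⟩ →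
      |deriv χ (x ⟨1, by omega⟩ / x ⟨0, by omega⟩ ^ (1 + α)) *
          x ⟨0, by omega⟩ ^ (-(1 + α)) * g x| ≤
        C * |deriv χ (x ⟨1, by omega⟩ / x ⟨0, by omega⟩ ^ (1 + α))| *
          x ⟨0, by omega⟩ ^ (-α)) ∧
    ∀ p : ℝ, 1 ≤ p → p < 1 + 2 / α →
      MemLp
        (fun x : EuclideanSpace ℝ (Fin n) =>
          deriv χ (x ⟨1, by omega⟩ / x ⟨0, by omega⟩ ^ (1 + α)) *
            x ⟨0, by omega⟩ ^ (-(1 + α)) * g x)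
        (ENNReal.ofReal p)
        (volume.restrict
          ({x : EuclideanSpace ℝ (Fin n) | 0 < x ⟨0, by omega⟩ ∧ 0 < x ⟨1, by omega⟩} ∩
            Metric.ball 0 1)) := by
  exact aux_cutoff n α δ hα0 hα1 hδ χ hχ hχc hχ0 g hg hgc ⟨0, by omega⟩ ⟨1, by omega⟩
    (by simp [Fin.ext_iff]) hg0
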